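/- Let G be a marked graph and v an unlooped, unmarked vertex. Writing S = d^φ · Σ_{T⊆V(G), v∉T} A^{n−|T|} B^{|T|} d^{ν(𝒜(G)_T)}, the following hold: [G with v unlooped-unmarked] = S + B[G_cru^v − v]; [G with v marked u, unlooped] = S + B[G − v]; [G with v marked c, unlooped] = A[G − v] + B[G_cru^v − v]; and [G with v marked cr, unlooped] = B[G − v] + A[G_cru^v − v]. (Here only the loop-mark combination of v varies; the underlying edges, loops elsewhere, and marks of other vertices are fixed.) -/

import Mathlib

/-- The six vertex marks of a multiply marked graph. -/
inductive Mark : Type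
  | un | r | c | cr | u | ur
deriving DecidableEq

/-- A (multiply marked) graph: symmetric irreflexive adjacency, loops,
marks, and a number of free loops. -/
structure MGraph (V : Type) [DecidableEq V] : Type where
  adj : V → V → Bool
  adj_symm : ∀ x y, adj x y = adj y x
  adj_irrefl : ∀ x, adj x x = false
  loop : V → Bool
  mark : V → Mark
  freeLoops : ℕ

namespace MGraph

variable {V : Type} [DecidableEq V]

/-- The mark change at `v` itself: unmarked↔u, r↔ur, c↔cr. -/
def flipV : Mark → Mark
  | .un => .u | .u => .un | .r => .ur | .ur => .r | .c => .cr | .cr => .c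

/-- The mark change at neighbors of `v`: unmarked↔r, c↔ur, u↔cr. -/
def flipN : Mark → Mark
  | .un => .r | .r => .un | .c => .ur | .ur => .c | .u => .cr | .cr => .u

/-- The marked local complement `G_cru^v`. -/
def mlc (G : MGraph V) (v : V) : MGraph V where
  adj x y := if x ≠ y ∧ G.adj v x = true ∧ G.adj v y = true then !(G.adj x y) else G.adj x y
  adj_symm := by
    intro x y
    try dsimp only
    by_cases h : x ≠ y ∧ G.adj v x = true ∧ G.adj v y = true
    · rw [if_pos h, if_pos ⟨h.1.symm, h.2.2, h.2.1⟩, G.adj_symm]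
    · rw [if_neg h, if_neg (fun h' => h ⟨h'.1.symm, h'.2.2, h'.2.1⟩), G.adj_symm]
  adj_irrefl := by
    intro x
    try dsimp only
    rw [if_neg (fun h => h.1 rfl), G.adj_irrefl]
  loop := G.loop
  mark x := if x = v then flipV (G.mark x)
            else if G.adj v x = true then flipN (G.mark x) else G.mark x
  freeLoops := G.freeLoops

end MGraph

/-- Whether a mark contains the letter `r`. -/
def Mark.hasR : Mark → Bool
  | .r => true | .cr => true | .ur => true | _ => false

/-- Whether a mark is `c` or `cr`. -/
def Mark.isC : Mark → Bool
  | .c => true | .cr => true | _ => false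

/-- Whether a mark is `u` or `ur`. -/
def Mark.isU : Mark → Bool
  | .u => true | .ur => true | _ => false

/-- GF(2)-nullity of a square matrix. -/
noncomputable def nullity {n : Type} [Fintype n] (M : Matrix n n (ZMod 2)) : ℕ :=
  Fintype.card n - M.rank

namespace MGraph

variable {V : Type} [DecidableEq V]

/-- The matrix `𝒜(G) + Δ_T` over GF(2): off-diagonal entries record adjacency,
and the diagonal entry at `x` is the loop contribution plus the `Δ_T` entry,
which is `1` iff (`x ∈ T` and the mark of `x` has no `r`) or (`x ∉ T` and it has an `r`). -/
def matT (G : MGraph V) (T : Finset V) : Matrix V V (ZMod 2) :=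
  Matrix.of fun x y =>
    if x = y then
      (if G.loop x = true then 1 else 0) +
        (if ((x ∈ T) ↔ (G.mark x).hasR = false) then 1 else 0)
    else if G.adj x y = true then 1 else 0

/-- The vertices whose rows and columns are kept in `𝒜(G)_T`: delete `x` iff
`x` is marked `c`/`cr` with diagonal entry `0`, or marked `u`/`ur` with diagonal entry `1`. -/
def keep (G : MGraph V) (T : Finset V) (x : V) : Bool :=
  !(((G.mark x).isC && decide (G.matT T x x = 0)) ||
    ((G.mark x).isU && decide (G.matT T x x = 1)))

/-- The matrix `𝒜(G)_T`, the submatrix of `𝒜(G) + Δ_T` on the kept vertices. -/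
def subMat (G : MGraph V) (T : Finset V) :
    Matrix {x : V // G.keep T x = true} {x : V // G.keep T x = true} (ZMod 2) :=
  (G.matT T).submatrix Subtype.val Subtype.val

/-- The marked-graph bracket polynomial, evaluated at elements `A`, `B`, `d`
of a commutative ring. -/
noncomputable def bracket (G : MGraph V) [Fintype V] {R : Type*} [CommRing R]
    (A B d : R) : R :=
  d ^ G.freeLoops *
    ∑ T : Finset V, A ^ (Fintype.card V - T.card) * B ^ T.card * d ^ nullity (G.subMat T)

/-- The weighted marked-graph bracket polynomial with vertex weights `α`, `β`. -/
noncomputable def wbracket (G : MGraph V) [Fintype V] {R : Type*} [CommRing R]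
    (d : R) (α β : V → R) : R :=
  d ^ G.freeLoops *
    ∑ T : Finset V, (∏ x ∈ Tᶜ, α x) * (∏ x ∈ T, β x) * d ^ nullity (G.subMat T)

/-- Deletion of the vertex `v`. -/
def delete (G : MGraph V) (v : V) : MGraph {x : V // x ≠ v} where
  adj x y := G.adj x.val y.val
  adj_symm := fun x y => G.adj_symm x.val y.val
  adj_irrefl := fun x => G.adj_irrefl x.val
  loop x := G.loop x.val
  mark x := G.mark x.val
  freeLoops := G.freeLoops

/-- Change the mark of the vertex `v` to `m`. -/
def setMark (G : MGraph V) (v : V) (m : Mark) : MGraph V :=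
  { G with mark := fun x => if x = v then m else G.mark x }

/-- The one-vertex graph with given loop status and mark (and no free loops). -/
def single (l : Bool) (m : Mark) : MGraph Unit where
  adj _ _ := false
  adj_symm := fun _ _ => rfl
  adj_irrefl := fun _ => rfl
  loop _ := l
  mark _ := m
  freeLoops := 0

end MGraph


/-!
Split each state sum according to whether `v ∈ T`. As `v` is unlooped, its diagonal entry in
`𝒜(G) + Δ_T` is `1` exactly when `v ∈ T` (for the mark `cr`: when `v ∉ T`), and together with
the mark this decides whether `v` is deleted from `𝒜(G)_T`, which leaves the matrix of `G − v`,
or survives. A surviving `v` with diagonal entry `1` is a pivot: eliminating it over GF(2)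
preserves the nullity, and the Schur complement is the matrix of `G_cru^v − v`, because it
toggles all entries between neighbours of `v`, diagonal ones included, while the mark changes at
the neighbours toggle their `r` and swap the `c`-type and `u`-type deletion rules accordingly.
A surviving `v` with diagonal entry `0` contributes as it does in `G`.
-/

theorem Finset.subtype_ne_insert_self {V : Type*} [DecidableEq V] (v : V) (T : Finset V) :
    (insert v T).subtype (· ≠ v) = T.subtype (· ≠ v) := by
  ext x
  simp [x.2]

theorem Fintype.sum_finset_subtype_ne {V M : Type*} [DecidableEq V] [Fintype V]
    [AddCommMonoid M] (v : V) (g : Finset {x // x ≠ v} → M) :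
    ∑ T, g T = ∑ T ∈ Finset.univ.filter (fun T : Finset V => v ∉ T), g (T.subtype (· ≠ v)) := by
  have left_inv : ∀ T : Finset {x // x ≠ v},
      (T.map (Function.Embedding.subtype _)).subtype (· ≠ v) = T := by
    intro T
    ext x
    simp [x.2]
  refine Finset.sum_nbij' (fun T => T.map (Function.Embedding.subtype _)) (·.subtype (· ≠ v))
    (by simp) (by simp) (fun T _ => left_inv T) (fun T hT => ?_) (fun T _ => by rw [left_inv])
  exact Finset.subtype_map_of_mem fun x hx => ne_of_mem_of_not_mem hx (Finset.mem_filter.mp hT).2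

theorem Fintype.sum_finset_filter_mem_eq_sum_insert {V M : Type*} [DecidableEq V] [Fintype V]
    [AddCommMonoid M] (v : V) (f : Finset V → M) :
    ∑ T ∈ Finset.univ.filter (fun T : Finset V => v ∈ T), f T =
      ∑ T ∈ Finset.univ.filter (fun T : Finset V => v ∉ T), f (insert v T) :=
  Finset.sum_nbij' (·.erase v) (insert v) (by simp) (by simp)
    (fun T hT => Finset.insert_erase (Finset.mem_filter.mp hT).2)
    (fun T hT => Finset.erase_insert (Finset.mem_filter.mp hT).2)
    (fun T hT => by rw [Finset.insert_erase (Finset.mem_filter.mp hT).2])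

namespace Matrix

variable {n K : Type*} [Fintype n] [DecidableEq n] [Field K]

/-- The Schur complement of the entry `M v v`. -/
def pivotAt (M : Matrix n n K) (v : n) : Matrix {x // x ≠ v} {x // x ≠ v} K :=
  of fun x y => M x y - M x v * (M v v)⁻¹ * M v y

theorem pivotAt_mulVec (M : Matrix n n K) {v : n} (hv : M v v ≠ 0) (u : n → K)
    (z : {x // x ≠ v}) :
    (M.pivotAt v *ᵥ fun x => u x) z = (M *ᵥ u) z - M z v * (M v v)⁻¹ * (M *ᵥ u) v := by
  simp only [mulVec, dotProduct, pivotAt, of_apply, Fintype.sum_eq_add_sum_subtype_ne _ v,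
    sub_mul, Finset.sum_sub_distrib, mul_add, Finset.mul_sum]
  field_simp
  ring

/-- Restriction to the coordinates other than `v` is an isomorphism of the two kernels. -/
theorem finrank_ker_pivotAt (M : Matrix n n K) {v : n} (hv : M v v ≠ 0) :
    Module.finrank K (LinearMap.ker (M.pivotAt v).mulVecLin) =
      Module.finrank K (LinearMap.ker M.mulVecLin) := by
  let restrict := LinearMap.funLeft K K (Subtype.val : {x // x ≠ v} → n)
  have maps_to : ∀ u ∈ LinearMap.ker M.mulVecLin,
      restrict u ∈ LinearMap.ker (M.pivotAt v).mulVecLin := by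
    intro u hu
    rw [LinearMap.mem_ker, mulVecLin_apply] at hu ⊢
    funext z
    exact (pivotAt_mulVec M hv u z).trans (by simp [hu])
  symm
  refine (LinearEquiv.ofBijective (restrict.restrict maps_to) ⟨?_, ?_⟩).finrank_eq
  · refine (injective_iff_map_eq_zero _).mpr fun ⟨u, hu⟩ hr => ?_
    have hrest : ∀ x : {x // x ≠ v}, u x = 0 := fun x => congrFun (congrArg Subtype.val hr) x
    have hpivot : M v v * u v = 0 := by
      simpa [mulVec, dotProduct, Fintype.sum_eq_add_sum_subtype_ne _ v, hrest] using
        congrFun (LinearMap.mem_ker.mp hu) v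
    ext y
    by_cases hy : y = v
    · subst hy
      simpa [hv] using hpivot
    · exact hrest ⟨y, hy⟩
  · rintro ⟨w, hw⟩
    rw [LinearMap.mem_ker, mulVecLin_apply] at hw
    let u : n → K := fun y =>
      if h : y = v then -(M v v)⁻¹ * ∑ x : {x // x ≠ v}, M v x * w x else w ⟨y, h⟩
    have hux : ∀ x : {x // x ≠ v}, u x = w x := fun x => dif_neg x.2
    have hrest : (fun x : {x // x ≠ v} => u x) = w := funext hux
    have hv0 : (M *ᵥ u) v = 0 := by
      simp only [mulVec, dotProduct, Fintype.sum_eq_add_sum_subtype_ne _ v, hux]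
      simp only [u, dif_pos]
      field_simp
      ring
    refine ⟨⟨u, LinearMap.mem_ker.mpr (funext fun z => ?_)⟩, Subtype.ext hrest⟩
    by_cases hz : z = v
    · subst hz
      exact hv0
    · have := pivotAt_mulVec M hv u ⟨z, hz⟩
      rw [hrest, hw, hv0] at this
      simpa using this.symm

end Matrix

theorem nullity_eq_finrank_ker {n : Type} [Fintype n] (M : Matrix n n (ZMod 2)) :
    nullity M = Module.finrank (ZMod 2) (LinearMap.ker M.mulVecLin) := by
  have := LinearMap.finrank_range_add_finrank_ker M.mulVecLin
  rw [Module.finrank_fintype_fun_eq_card] at this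
  unfold nullity Matrix.rank
  omega

theorem nullity_submatrix_equiv {m n : Type} [Fintype m] [Fintype n] (M : Matrix n n (ZMod 2))
    (e : m ≃ n) : nullity (M.submatrix e e) = nullity M := by
  rw [nullity, nullity, Matrix.rank_submatrix, Fintype.card_congr e]

theorem nullity_pivotAt {n : Type} [Fintype n] [DecidableEq n] (M : Matrix n n (ZMod 2))
    {v : n} (hv : M v v ≠ 0) : nullity (M.pivotAt v) = nullity M := by
  rw [nullity_eq_finrank_ker, nullity_eq_finrank_ker, M.finrank_ker_pivotAt hv]

theorem Mark.hasR_flipN (m : Mark) : (MGraph.flipN m).hasR = !m.hasR := by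
  cases m <;> rfl

namespace MGraph

section Matrices

variable {V : Type} [DecidableEq V] (H : MGraph V) (v : V) (T : Finset V)

theorem matT_apply_of_ne {x y : V} (h : x ≠ y) :
    H.matT T x y = if H.adj x y then 1 else 0 := by
  simp [matT, h]

theorem matT_apply_self (x : V) :
    H.matT T x x =
      (if H.loop x then 1 else 0) + (if (x ∈ T ↔ (H.mark x).hasR = false) then 1 else 0) := by
  simp [matT]

theorem matT_delete (x y : {x // x ≠ v}) :
    (H.delete v).matT (T.subtype (· ≠ v)) x y = H.matT T x y := by
  simp only [matT, delete, Matrix.of_apply, Finset.mem_subtype, Subtype.ext_iff]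
  congr

theorem keep_delete (x : {x // x ≠ v}) :
    (H.delete v).keep (T.subtype (· ≠ v)) x = H.keep T x := by
  simp only [keep, matT_delete]
  rfl

theorem matT_mlc_delete (x y : {x // x ≠ v}) :
    ((H.mlc v).delete v).matT (T.subtype (· ≠ v)) x y =
      H.matT T x y + H.matT T x v * H.matT T v y := by
  rw [H.matT_apply_of_ne T x.2, H.matT_apply_of_ne T (Ne.symm y.2), H.adj_symm x v]
  by_cases hxy : x = y
  · subst hxy
    rw [matT_apply_self, matT_apply_self]
    by_cases hadj : H.adj v x <;> by_cases hT : x.1 ∈ T <;> cases hR : (H.mark x).hasR <;>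
      cases hL : H.loop x <;> simp [delete, mlc, x.2, hadj, hT, hR, hL, Mark.hasR_flipN] <;>
      decide
  · have hxy' : x.1 ≠ y.1 := Subtype.coe_ne_coe.mpr hxy
    rw [matT_apply_of_ne _ _ hxy, matT_apply_of_ne _ _ hxy']
    by_cases hx : H.adj v x <;> by_cases hy : H.adj v y <;> cases h : H.adj x y <;>
      simp [delete, mlc, hxy', hx, hy, h, CharTwo.add_self_eq_zero]

theorem keep_mlc_delete (x : {x // x ≠ v}) :
    ((H.mlc v).delete v).keep (T.subtype (· ≠ v)) x = H.keep T x := by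
  have hdiag := H.matT_mlc_delete v T x x
  rw [H.matT_apply_of_ne T x.2, H.matT_apply_of_ne T (Ne.symm x.2), H.adj_symm x v] at hdiag
  simp only [keep, hdiag]
  by_cases hadj : H.adj v x
  · simp only [delete, mlc, x.2, hadj, if_false, if_true]
    generalize H.matT T x x = a
    cases H.mark x <;> revert a <;> decide
  · simp [delete, mlc, x.2, hadj]

variable {m : Mark}

theorem delete_setMark : (H.setMark v m).delete v = H.delete v := by
  simp only [delete, setMark, mk.injEq, true_and, and_true]
  funext x
  exact if_neg x.2

theorem matT_setMark (hR : m.hasR = (H.mark v).hasR) :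
    (H.setMark v m).matT T = H.matT T := by
  ext x y
  by_cases hx : x = v
  · subst hx
    simp only [matT, setMark, Matrix.of_apply, if_true, hR]
    rfl
  · simp only [matT, setMark, Matrix.of_apply, hx, if_false]
    rfl

theorem matT_setMark_of_notMem (hR : m.hasR = true) (hH : (H.mark v).hasR = false)
    (hvT : v ∉ T) : (H.setMark v m).matT T = H.matT (insert v T) := by
  ext x y
  by_cases hx : x = v
  · subst hx
    simp only [matT, setMark, Matrix.of_apply, hvT, ↓reduceIte, hR, Bool.true_eq_false,
      Finset.mem_insert, or_false, hH]
    rfl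
  · simp only [matT, setMark, Matrix.of_apply, hx, if_false, Finset.mem_insert, false_or]
    rfl

end Matrices

section Nullity

variable {V : Type} [DecidableEq V] [Fintype V] (H : MGraph V) (v : V) {T : Finset V}

theorem nullity_subMat_eq_delete (hv : H.keep T v = false) :
    nullity (H.subMat T) = nullity ((H.delete v).subMat (T.subtype (· ≠ v))) := by
  let e : {y : {x // x ≠ v} // (H.delete v).keep (T.subtype (· ≠ v)) y} ≃ {x // H.keep T x} :=
    (Equiv.subtypeEquivRight fun y => by rw [keep_delete]).trans <|
      (Equiv.subtypeSubtypeEquivSubtypeInter (· ≠ v) (H.keep T · = true)).trans <|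
        Equiv.subtypeEquivRight fun x => and_iff_right_of_imp <| by
          rintro hx rfl
          simp [hv] at hx
  rw [← nullity_submatrix_equiv _ e]
  congr 1
  ext a b
  exact (H.matT_delete v T a b).symm

theorem nullity_subMat_eq_mlc_delete (hv : H.keep T v = true) (hpivot : H.matT T v v = 1) :
    nullity (H.subMat T) = nullity (((H.mlc v).delete v).subMat (T.subtype (· ≠ v))) := by
  let e : {y : {x // x ≠ v} // ((H.mlc v).delete v).keep (T.subtype (· ≠ v)) y} ≃
      {a : {x // H.keep T x} // a ≠ ⟨v, hv⟩} :=
    (Equiv.subtypeEquivRight fun y => by rw [keep_mlc_delete]).trans <|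
      (Equiv.subtypeSubtypeEquivSubtypeInter (· ≠ v) (H.keep T · = true)).trans <|
        (Equiv.subtypeEquivRight fun x => and_comm).trans <|
          ((Equiv.subtypeEquivRight fun a => Subtype.ext_iff.not).trans
            (Equiv.subtypeSubtypeEquivSubtypeInter (H.keep T · = true) (· ≠ v))).symm
  rw [← nullity_pivotAt (H.subMat T) (v := ⟨v, hv⟩) (by simp [subMat, hpivot]),
    ← nullity_submatrix_equiv _ e]
  congr 1
  ext a b
  simp [Matrix.pivotAt, subMat, e, hpivot, matT_mlc_delete, CharTwo.sub_eq_add]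

variable {H v} {m : Mark}

theorem nullity_setMark {T' : Finset V} (hM : (H.setMark v m).matT T = H.matT T')
    (hk : (H.setMark v m).keep T v = H.keep T' v) :
    nullity ((H.setMark v m).subMat T) = nullity (H.subMat T') := by
  have hkeep : ∀ x, (H.setMark v m).keep T x = H.keep T' x := by
    intro x
    by_cases hx : x = v
    · rw [hx, hk]
    · simp only [keep, hM]
      simp [setMark, hx]
  rw [← nullity_submatrix_equiv _ (Equiv.subtypeEquivRight fun x => by rw [hkeep])]
  congr 1
  ext a b
  simp [subMat, hM]

end Nullity

section PartialBrackets

variable {V : Type} [DecidableEq V] [Fintype V] {R : Type*} [CommRing R]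

noncomputable def bracketNotMem (H : MGraph V) (v : V) (A B d : R) : R :=
  d ^ H.freeLoops * ∑ T ∈ Finset.univ.filter (fun T : Finset V => v ∉ T),
    A ^ (Fintype.card V - T.card) * B ^ T.card * d ^ nullity (H.subMat T)

noncomputable def bracketMem (H : MGraph V) (v : V) (A B d : R) : R :=
  d ^ H.freeLoops * ∑ T ∈ Finset.univ.filter (fun T : Finset V => v ∈ T),
    A ^ (Fintype.card V - T.card) * B ^ T.card * d ^ nullity (H.subMat T)

variable (H : MGraph V) (v : V) (A B d : R)

theorem bracket_eq_bracketNotMem_add_bracketMem :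
    H.bracket A B d = H.bracketNotMem v A B d + H.bracketMem v A B d := by
  rw [bracket, bracketNotMem, bracketMem, ← mul_add, add_comm,
    Finset.sum_filter_add_sum_filter_not]

theorem bracket_subtype_ne_eq_sum (K : MGraph {x // x ≠ v}) :
    K.bracket A B d = d ^ K.freeLoops * ∑ T ∈ Finset.univ.filter (fun T : Finset V => v ∉ T),
      A ^ (Fintype.card V - 1 - T.card) * B ^ T.card *
        d ^ nullity (K.subMat (T.subtype (· ≠ v))) := by
  have hcard : Fintype.card {x // x ≠ v} = Fintype.card V - 1 := by simp
  rw [bracket, Fintype.sum_finset_subtype_ne v, hcard]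
  congr 1
  refine Finset.sum_congr rfl fun T hT => ?_
  rw [Finset.card_subtype, Finset.filter_true_of_mem fun x hx =>
    ne_of_mem_of_not_mem hx (Finset.mem_filter.mp hT).2]

variable {H v A B d}

theorem bracketNotMem_congr {H' : MGraph V}
    (hν : ∀ T, v ∉ T → nullity (H'.subMat T) = nullity (H.subMat T))
    (hφ : H'.freeLoops = H.freeLoops) :
    H'.bracketNotMem v A B d = H.bracketNotMem v A B d := by
  rw [bracketNotMem, bracketNotMem, hφ]
  congr 1
  refine Finset.sum_congr rfl fun T hT => ?_
  rw [hν T (Finset.mem_filter.mp hT).2]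

theorem bracketNotMem_eq_mul_bracket {K : MGraph {x // x ≠ v}}
    (hν : ∀ T, v ∉ T → nullity (H.subMat T) = nullity (K.subMat (T.subtype (· ≠ v))))
    (hφ : K.freeLoops = H.freeLoops) :
    H.bracketNotMem v A B d = A * K.bracket A B d := by
  rw [bracket_subtype_ne_eq_sum v, hφ, bracketNotMem, mul_left_comm A, Finset.mul_sum _ _ A]
  congr 1
  refine Finset.sum_congr rfl fun T hT => ?_
  have hvT := (Finset.mem_filter.mp hT).2
  have hcard := Finset.card_lt_univ_of_notMem hvT
  rw [hν T hvT, show Fintype.card V - T.card = Fintype.card V - 1 - T.card + 1 by omega, pow_succ]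
  ring

theorem bracketMem_eq_mul_bracket {K : MGraph {x // x ≠ v}}
    (hν : ∀ T, v ∉ T → nullity (H.subMat (insert v T)) = nullity (K.subMat (T.subtype (· ≠ v))))
    (hφ : K.freeLoops = H.freeLoops) :
    H.bracketMem v A B d = B * K.bracket A B d := by
  rw [bracket_subtype_ne_eq_sum v, hφ, bracketMem, Fintype.sum_finset_filter_mem_eq_sum_insert,
    mul_left_comm B, Finset.mul_sum _ _ B]
  congr 1
  refine Finset.sum_congr rfl fun T hT => ?_
  have hvT := (Finset.mem_filter.mp hT).2
  rw [hν T hvT, Finset.card_insert_of_notMem hvT,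
    show Fintype.card V - (T.card + 1) = Fintype.card V - 1 - T.card by omega, pow_succ]
  ring

end PartialBrackets

section UnmarkedVertex

variable {V : Type} [DecidableEq V] [Fintype V] (G : MGraph V) {v : V} (hl : G.loop v = false)
include hl

theorem nullity_insert_eq_mlc_delete (hm : G.mark v = .un) (T : Finset V) :
    nullity (G.subMat (insert v T)) =
      nullity (((G.mlc v).delete v).subMat (T.subtype (· ≠ v))) := by
  rw [G.nullity_subMat_eq_mlc_delete v (by simp [keep, hm, Mark.isC, Mark.isU])
    (by simp [matT, hl, hm, Mark.hasR]), Finset.subtype_ne_insert_self]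

theorem nullity_setMark_u_of_notMem (hm : G.mark v = .un) {T : Finset V} (hvT : v ∉ T) :
    nullity ((G.setMark v .u).subMat T) = nullity (G.subMat T) :=
  nullity_setMark (G.matT_setMark v T (by rw [hm]; rfl))
    (by simp [keep, matT, setMark, hl, hm, hvT, Mark.isC, Mark.isU, Mark.hasR])

theorem nullity_setMark_u_insert (T : Finset V) :
    nullity ((G.setMark v .u).subMat (insert v T)) =
      nullity ((G.delete v).subMat (T.subtype (· ≠ v))) := by
  rw [nullity_subMat_eq_delete _ v
      (by simp [keep, matT, setMark, hl, Mark.isC, Mark.isU, Mark.hasR]),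
    delete_setMark, Finset.subtype_ne_insert_self]

theorem nullity_setMark_c_of_notMem {T : Finset V} (hvT : v ∉ T) :
    nullity ((G.setMark v .c).subMat T) = nullity ((G.delete v).subMat (T.subtype (· ≠ v))) := by
  rw [nullity_subMat_eq_delete _ v (by simp [keep, matT, setMark, hl, hvT, Mark.isC, Mark.hasR]),
    delete_setMark]

theorem nullity_setMark_c_insert (hm : G.mark v = .un) (T : Finset V) :
    nullity ((G.setMark v .c).subMat (insert v T)) =
      nullity (((G.mlc v).delete v).subMat (T.subtype (· ≠ v))) := by
  rw [nullity_setMark (G.matT_setMark v _ (by rw [hm]; rfl))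
    (by simp [keep, matT, setMark, hl, hm, Mark.isC, Mark.isU, Mark.hasR]),
    G.nullity_insert_eq_mlc_delete hl hm]

theorem nullity_setMark_cr_of_notMem (hm : G.mark v = .un) {T : Finset V} (hvT : v ∉ T) :
    nullity ((G.setMark v .cr).subMat T) =
      nullity (((G.mlc v).delete v).subMat (T.subtype (· ≠ v))) := by
  rw [nullity_setMark (G.matT_setMark_of_notMem v T rfl (by rw [hm]; rfl) hvT)
    (by simp [keep, matT, setMark, hl, hm, hvT, Mark.isC, Mark.isU, Mark.hasR]),
    G.nullity_insert_eq_mlc_delete hl hm]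

theorem nullity_setMark_cr_insert (T : Finset V) :
    nullity ((G.setMark v .cr).subMat (insert v T)) =
      nullity ((G.delete v).subMat (T.subtype (· ≠ v))) := by
  rw [nullity_subMat_eq_delete _ v (by simp [keep, matT, setMark, hl, Mark.isC, Mark.hasR]),
    delete_setMark, Finset.subtype_ne_insert_self]

end UnmarkedVertex

end MGraph

/-- let `v` be an unlooped, unmarked vertex of `G` and let
`S = d^φ · Σ_{T ⊆ V(G), v ∉ T} A^{n−|T|} B^{|T|} d^{ν(𝒜(G)_T)}`.  Then:
`[G] = S + B[G_cru^v − v]`;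
`[G with v marked u] = S + B[G − v]`;
`[G with v marked c] = A[G − v] + B[G_cru^v − v]`; and
`[G with v marked cr] = B[G − v] + A[G_cru^v − v]`. -/
theorem bracket_variants_at_vertex {V : Type} [DecidableEq V] [Fintype V]
    (G : MGraph V) (v : V) (hl : G.loop v = false) (hm : G.mark v = Mark.un)
    {R : Type*} [CommRing R] (A B d : R) :
    let S : R := d ^ G.freeLoops *
      ∑ T ∈ Finset.univ.filter (fun T : Finset V => v ∉ T),
        A ^ (Fintype.card V - T.card) * B ^ T.card * d ^ nullity (G.subMat T)
    G.bracket A B d = S + B * ((G.mlc v).delete v).bracket A B d ∧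
    (G.setMark v Mark.u).bracket A B d = S + B * (G.delete v).bracket A B d ∧
    (G.setMark v Mark.c).bracket A B d =
      A * (G.delete v).bracket A B d + B * ((G.mlc v).delete v).bracket A B d ∧
    (G.setMark v Mark.cr).bracket A B d =
      B * (G.delete v).bracket A B d + A * ((G.mlc v).delete v).bracket A B d := by
  intro S
  change G.bracket A B d = G.bracketNotMem v A B d + _ ∧
    _ = G.bracketNotMem v A B d + _ ∧ _
  simp only [MGraph.bracket_eq_bracketNotMem_add_bracketMem _ v]
  refine ⟨?_, ?_, ?_, ?_⟩
  · rw [MGraph.bracketMem_eq_mul_bracket (fun T _ => G.nullity_insert_eq_mlc_delete hl hm T) rfl]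
  · rw [MGraph.bracketNotMem_congr (fun T => G.nullity_setMark_u_of_notMem hl hm) rfl,
      MGraph.bracketMem_eq_mul_bracket (fun T _ => G.nullity_setMark_u_insert hl T) rfl]
  · rw [MGraph.bracketNotMem_eq_mul_bracket (fun T => G.nullity_setMark_c_of_notMem hl) rfl,
      MGraph.bracketMem_eq_mul_bracket (fun T _ => G.nullity_setMark_c_insert hl hm T) rfl]
  · rw [MGraph.bracketNotMem_eq_mul_bracket (fun T => G.nullity_setMark_cr_of_notMem hl hm) rfl,
      MGraph.bracketMem_eq_mul_bracket (fun T _ => G.nullity_setMark_cr_insert hl T) rfl,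
      add_comm]
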